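/- There is a unique p_0 in (0,1) such that 2√π · 3^{-p_0/2} = (1-p_0)(2-p_0)Γ((1-p_0)/2); moreover 2√π·3^{-p/2} > (1-p)(2-p)Γ((1-p)/2) for p in (p_0,1) and 2√π·3^{-p/2} < (1-p)(2-p)Γ((1-p)/2) for p in (0,p_0). -/

import Mathlib

/-!
Since `(1 - p) Γ((1 - p) / 2) = 2 Γ((3 - p) / 2)`, the comparison is between `√π` and
`G(p) = (2 - p) Γ((3 - p) / 2) 3 ^ (p / 2)`, and `G(0) = √π`. Up to an exponential factor, `G` is
`(x - 1/2) Γ(x)` at `x = (3 - p) / 2 ∈ [1, 3/2]`, which is strictly log-concave there: Euler's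
product gives `Γ(m - d) Γ(m + d) / Γ(m)² = ∏ⱼ (1 - d² / (m + j)²)⁻¹ ≤ (1 - d² / t)⁻¹` with
`t = m - 1/2`, and this is less than `t² / (t² - d²)` because `t < 1`. A continuous, strictly
log-concave function exceeds the smaller endpoint value at every interior point, so once
`G(1/2) > √π > G(49/50)` (Euler's sequence bounds `Γ(1/4)` from below), `G` crosses `√π` exactly
once in `(0, 1)`, from above to below.
-/

open Real Set Filter Finset

theorem Finset.one_sub_sum_le_prod_one_sub {ι : Type*} (s : Finset ι) {f : ι → ℝ}
    (hf₀ : ∀ i ∈ s, 0 ≤ f i) (hf₁ : ∀ i ∈ s, f i ≤ 1) :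
    1 - ∑ i ∈ s, f i ≤ ∏ i ∈ s, (1 - f i) := by
  classical
  induction s using Finset.induction_on with
  | empty => simp
  | insert i s hi ih =>
    rw [prod_insert hi, sum_insert hi]
    have hfi₀ := hf₀ i (mem_insert_self i s)
    have hfi₁ := hf₁ i (mem_insert_self i s)
    have ih := ih (fun j hj => hf₀ j (mem_insert_of_mem hj))
      (fun j hj => hf₁ j (mem_insert_of_mem hj))
    have hsum : 0 ≤ ∑ j ∈ s, f j := sum_nonneg fun j hj => hf₀ j (mem_insert_of_mem hj)
    nlinarith [mul_le_mul_of_nonneg_left ih (sub_nonneg.mpr hfi₁)]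

theorem sum_range_one_div_add_sq_le {m : ℝ} (hm : 1 / 2 < m) (n : ℕ) :
    ∑ j ∈ range n, 1 / (m + j) ^ 2 ≤ 1 / (m - 1 / 2) := by
  suffices h : ∑ j ∈ range n, 1 / (m + j) ^ 2 ≤ 1 / (m - 1 / 2) - 1 / (m + n - 1 / 2) by
    have : 0 < m + n - 1 / 2 := by have := n.cast_nonneg (α := ℝ); linarith
    linarith [one_div_pos.mpr this]
  induction n with
  | zero => simp
  | succ n ih =>
    have hk : 1 / 2 < m + n := by have := n.cast_nonneg (α := ℝ); linarith
    -- `1 / (k - 1/2) - 1 / (k + 1/2) = 1 / (k ^ 2 - 1/4)`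
    have step : 1 / (m + n) ^ 2 ≤ 1 / (m + n - 1 / 2) - 1 / (m + n + 1 / 2) := by
      rw [div_sub_div _ _ (by linarith) (by linarith), div_le_div_iff₀ (by positivity)
        (by nlinarith)]
      nlinarith
    rw [sum_range_succ, Nat.cast_succ, ← add_assoc, add_sub_assoc _ 1,
      show (1 : ℝ) - 1 / 2 = 1 / 2 by norm_num]
    linarith

theorem one_sub_mul_prod_sq_le_prod_sq_sub_sq {m d : ℝ} (hm : 1 / 2 < m) (hd : d ^ 2 ≤ m ^ 2)
    (n : ℕ) :
    (1 - d ^ 2 / (m - 1 / 2)) * ∏ j ∈ range n, (m + j) ^ 2 ≤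
      ∏ j ∈ range n, ((m + j) ^ 2 - d ^ 2) := by
  have hmj : ∀ j : ℕ, m ≤ m + j := fun j => le_add_of_nonneg_right j.cast_nonneg
  have hsplit : ∏ j ∈ range n, ((m + j) ^ 2 - d ^ 2) =
      (∏ j ∈ range n, (1 - d ^ 2 / (m + j) ^ 2)) * ∏ j ∈ range n, (m + j) ^ 2 := by
    rw [← prod_mul_distrib]
    refine prod_congr rfl fun j _ => ?_
    have : (m + j) ^ 2 ≠ 0 := by have := hmj j; positivity
    field_simp
  have hsum : ∑ j ∈ range n, d ^ 2 / (m + j) ^ 2 ≤ d ^ 2 / (m - 1 / 2) := by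
    have := mul_le_mul_of_nonneg_left (sum_range_one_div_add_sq_le hm n) (sq_nonneg d)
    simpa only [mul_sum, mul_one_div] using this
  have hweier := one_sub_sum_le_prod_one_sub (range n) (f := fun j : ℕ => d ^ 2 / (m + j) ^ 2)
    (fun j _ => by positivity) fun j _ => by
      have := hmj j
      rw [div_le_one (by positivity)]; nlinarith
  rw [hsplit]
  gcongr
  linarith

theorem Real.one_sub_mul_GammaSeq_sub_mul_GammaSeq_add_le {m d : ℝ} (hm : 1 / 2 < m) (hd : |d| < m)
    {n : ℕ} (hn : n ≠ 0) :
    (1 - d ^ 2 / (m - 1 / 2)) * (GammaSeq (m - d) n * GammaSeq (m + d) n) ≤ GammaSeq m n ^ 2 := by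
  obtain ⟨hda, hdb⟩ := abs_lt.mp hd
  have hpos : ∀ {s : ℝ}, 0 < s → 0 < ∏ j ∈ range (n + 1), (s + j) :=
    fun hs => prod_pos fun j _ => by positivity
  have hpow : (n : ℝ) ^ (m - d) * (n : ℝ) ^ (m + d) = ((n : ℝ) ^ m) ^ 2 := by
    rw [← rpow_add (by positivity), ← rpow_two, ← rpow_mul (by positivity)]
    ring_nf
  have hprod : (∏ j ∈ range (n + 1), (m - d + j)) * ∏ j ∈ range (n + 1), (m + d + j) =
      ∏ j ∈ range (n + 1), ((m + j) ^ 2 - d ^ 2) := by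
    rw [← prod_mul_distrib]; exact prod_congr rfl fun j _ => by ring
  have key := one_sub_mul_prod_sq_le_prod_sq_sub_sq hm (sq_le_sq' hda.le hdb.le) (n + 1)
  rw [Finset.prod_pow, ← hprod] at key
  simp only [GammaSeq]
  rw [div_mul_div_comm, div_pow, mul_mul_mul_comm, hpow, ← sq, ← mul_pow, mul_div_assoc',
    div_le_div_iff₀ (mul_pos (hpos (by linarith)) (hpos (by linarith))) (by positivity)]
  have : 0 ≤ ((n : ℝ) ^ m * n.factorial) ^ 2 := sq_nonneg _
  nlinarith [mul_le_mul_of_nonneg_left key this]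

theorem Real.one_sub_mul_Gamma_sub_mul_Gamma_add_le {m d : ℝ} (hm : 1 / 2 < m) (hd : |d| < m) :
    (1 - d ^ 2 / (m - 1 / 2)) * (Gamma (m - d) * Gamma (m + d)) ≤ Gamma m ^ 2 :=
  le_of_tendsto_of_tendsto
    (tendsto_const_nhds.mul ((GammaSeq_tendsto_Gamma _).mul (GammaSeq_tendsto_Gamma _)))
    ((GammaSeq_tendsto_Gamma m).pow 2)
    ((eventually_ne_atTop 0).mono fun _ hn =>
      one_sub_mul_GammaSeq_sub_mul_GammaSeq_add_le hm hd hn)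

theorem Real.mul_Gamma_sub_mul_mul_Gamma_add_lt {m d : ℝ} (hd : 0 < d) (hdm : d < m - 1 / 2)
    (hm : m < 3 / 2) :
    (m - d - 1 / 2) * Gamma (m - d) * ((m + d - 1 / 2) * Gamma (m + d)) <
      ((m - 1 / 2) * Gamma m) ^ 2 := by
  set t := m - 1 / 2 with ht
  have hweak := one_sub_mul_Gamma_sub_mul_Gamma_add_le (m := m) (d := d) (by linarith)
    (by rw [abs_of_pos hd]; linarith)
  have hΓ : 0 < Gamma (m - d) * Gamma (m + d) :=
    mul_pos (Gamma_pos_of_pos (by linarith)) (Gamma_pos_of_pos (by linarith))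
  -- strictness comes from `t < 1`: `t ^ 2 - d ^ 2 < t * (t - d ^ 2)`
  calc (m - d - 1 / 2) * Gamma (m - d) * ((m + d - 1 / 2) * Gamma (m + d))
      = (t ^ 2 - d ^ 2) * (Gamma (m - d) * Gamma (m + d)) := by ring
    _ < t ^ 2 * ((1 - d ^ 2 / t) * (Gamma (m - d) * Gamma (m + d))) := by
        have ht0 : t ≠ 0 := by linarith
        rw [← mul_assoc (t ^ 2), show t ^ 2 * (1 - d ^ 2 / t) = t * (t - d ^ 2) by field_simp]
        exact mul_lt_mul_of_pos_right
          (by nlinarith [mul_pos (mul_pos hd hd) (show 0 < 1 - t by linarith)]) hΓ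
    _ ≤ t ^ 2 * Gamma m ^ 2 := by gcongr
    _ = (t * Gamma m) ^ 2 := by ring

theorem Real.GammaSeq_le_Gamma {x : ℝ} (hx : 0 < x) {n : ℕ} (hn : n ≠ 0) :
    GammaSeq x n ≤ Gamma x := by
  have hfeq : ∀ {y : ℝ}, 0 < y → (log ∘ Gamma) (y + 1) = (log ∘ Gamma) y + log y :=
    fun {y} hy => by
      rw [Function.comp_apply, Gamma_add_one hy.ne', log_mul hy.ne' (Gamma_pos_of_pos hy).ne',
        add_comm, Function.comp_apply]
  have hlog := BohrMollerup.ge_logGammaSeq convexOn_log_Gamma hfeq hx hn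
  have hn' : (0 : ℝ) < n := Nat.cast_pos.mpr (Nat.pos_of_ne_zero hn)
  have hprod : 0 < ∏ j ∈ range (n + 1), (x + j) := prod_pos fun j _ => by positivity
  have hseq : log (GammaSeq x n) = BohrMollerup.logGammaSeq x n := by
    rw [GammaSeq, BohrMollerup.logGammaSeq, log_div (by positivity) hprod.ne',
      log_mul (by positivity) (by positivity), log_rpow hn',
      log_prod fun j _ => by positivity]
  rw [Function.comp_apply, Gamma_one, log_one, zero_add, ← hseq] at hlog
  exact (log_le_log_iff (by rw [GammaSeq]; positivity) (Gamma_pos_of_pos hx)).mp hlog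

theorem not_isMinOn_of_mul_lt_sq {f : ℝ → ℝ} {a b r : ℝ} (hf₀ : ∀ x ∈ Icc a b, 0 ≤ f x)
    (hmid : ∀ x ε, 0 < ε → a ≤ x - ε → x + ε ≤ b → f (x - ε) * f (x + ε) < f x ^ 2)
    (hr : r ∈ Ioo a b) : ¬ IsMinOn f (Icc a b) r := by
  intro hmin
  obtain ⟨ε, hε, haε, hεb⟩ : ∃ ε > 0, a ≤ r - ε ∧ r + ε ≤ b :=
    ⟨min (r - a) (b - r), lt_min (by linarith [hr.1]) (by linarith [hr.2]),
      by linarith [min_le_left (r - a) (b - r)], by linarith [min_le_right (r - a) (b - r)]⟩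
  have hl : f r ≤ f (r - ε) := hmin ⟨haε, by linarith⟩
  have hu : f r ≤ f (r + ε) := hmin ⟨by linarith, hεb⟩
  have hr₀ : 0 ≤ f r := hf₀ r (Ioo_subset_Icc_self hr)
  nlinarith [hmid r ε hε haε hεb, mul_le_mul hl hu hr₀ (hr₀.trans hl)]

theorem min_lt_of_mem_Ioo_of_mul_lt_sq {f : ℝ → ℝ} {a b r : ℝ} (hf : ContinuousOn f (Icc a b))
    (hf₀ : ∀ x ∈ Icc a b, 0 ≤ f x)
    (hmid : ∀ x ε, 0 < ε → a ≤ x - ε → x + ε ≤ b → f (x - ε) * f (x + ε) < f x ^ 2)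
    (hr : r ∈ Ioo a b) : min (f a) (f b) < f r := by
  obtain ⟨w, hw, hwmin⟩ := isCompact_Icc.exists_isMinOn (nonempty_Icc.mpr (hr.1.trans hr.2).le) hf
  have hw_end : w = a ∨ w = b := by
    by_contra! hne
    exact not_isMinOn_of_mul_lt_sq hf₀ hmid ⟨hw.1.lt_of_ne hne.1.symm, hw.2.lt_of_ne hne.2⟩ hwmin
  by_contra! hle
  have hfw : min (f a) (f b) ≤ f w := by
    rcases hw_end with rfl | rfl
    exacts [min_le_left _ _, min_le_right _ _]
  exact not_isMinOn_of_mul_lt_sq hf₀ hmid hr fun y hy => (hle.trans hfw).trans (hwmin hy)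

theorem exists_unique_crossing_of_min_lt {f : ℝ → ℝ} {a b s e c : ℝ}
    (hf : ContinuousOn f (Icc a b))
    (hqc : ∀ x y z, a ≤ x → y ≤ b → z ∈ Ioo x y → min (f x) (f y) < f z)
    (ha : f a = c) (hs : c < f s) (he : f e < c) (has : a ≤ s) (hse : s ≤ e) (heb : e ≤ b) :
    ∃ p₀ ∈ Ioo a b, f p₀ = c ∧ (∀ p ∈ Ioo a b, f p = c → p = p₀) ∧
      (∀ p ∈ Ioo p₀ b, f p < c) ∧ (∀ p ∈ Ioo a p₀, c < f p) := by
  obtain ⟨p₀, ⟨hsp₀, hp₀e⟩, hp₀⟩ := intermediate_value_Ioo' hse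
    (hf.mono (Icc_subset_Icc has heb)) ⟨he, hs⟩
  have has' : a < s := has.lt_of_ne (by rintro rfl; exact hs.ne' ha)
  -- `f a = f p₀ = c`, so quasiconcavity forces `f > c` strictly between them ...
  have left : ∀ p ∈ Ioo a p₀, c < f p := fun p hp => by
    simpa [ha, hp₀] using hqc a p₀ p le_rfl (by linarith) hp
  -- ... and `f p ≥ c` beyond `p₀` would force `f p₀ > c`
  have right : ∀ p ∈ Ioo p₀ b, f p < c := fun p hp => by
    by_contra! hcp
    have := hqc a p p₀ le_rfl hp.2.le ⟨by linarith, hp.1⟩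
    rw [ha, min_eq_left hcp, hp₀] at this
    exact this.false
  refine ⟨p₀, ⟨by linarith, by linarith⟩, hp₀, fun p hp hfp => ?_, right, left⟩
  rcases lt_trichotomy p p₀ with h | h | h
  · exact absurd hfp (left p ⟨hp.1, h⟩).ne'
  · exact h
  · exact absurd hfp (right p ⟨h, hp.2⟩).ne

-- `scaledGamma p / √π` is the ratio `c_∞(p) / c_2(p)` of the two constants.
noncomputable def scaledGamma (p : ℝ) : ℝ := (2 - p) * Gamma ((3 - p) / 2) * 3 ^ (p / 2)

theorem scaledGamma_pos {p : ℝ} (hp : p < 2) : 0 < scaledGamma p := by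
  have := Gamma_pos_of_pos (show 0 < (3 - p) / 2 by linarith)
  have := rpow_pos_of_pos (show (0 : ℝ) < 3 by norm_num) (p / 2)
  exact mul_pos (mul_pos (by linarith) ‹_›) ‹_›

theorem continuousOn_scaledGamma : ContinuousOn scaledGamma (Iio 3) := by
  have hΓ : ContinuousOn (fun p : ℝ => Gamma ((3 - p) / 2)) (Iio 3) :=
    differentiableOn_Gamma_Ioi.continuousOn.comp (by fun_prop) fun p (hp : p < 3) =>
      show 0 < (3 - p) / 2 by linarith
  exact ((continuousOn_const.sub continuousOn_id).mul hΓ).mul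
    (continuous_const.rpow (by fun_prop) fun _ => Or.inl three_ne_zero).continuousOn

theorem scaledGamma_sub_mul_scaledGamma_add_lt {r ε : ℝ} (hε : 0 < ε) (hr : 0 < r)
    (hrε : r + ε < 2) : scaledGamma (r - ε) * scaledGamma (r + ε) < scaledGamma r ^ 2 := by
  have key := mul_Gamma_sub_mul_mul_Gamma_add_lt (m := (3 - r) / 2) (d := ε / 2)
    (by linarith) (by linarith) (by linarith)
  have hpow : (3 : ℝ) ^ ((r - ε) / 2) * 3 ^ ((r + ε) / 2) = (3 ^ (r / 2)) ^ 2 := by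
    rw [← rpow_add (by norm_num), ← rpow_two, ← rpow_mul (by norm_num)]
    ring_nf
  -- `scaledGamma p = 2 * (x - 1/2) * Γ x * 3 ^ (p / 2)` with `x = (3 - p) / 2`
  calc scaledGamma (r - ε) * scaledGamma (r + ε)
      = 4 * (((3 - r) / 2 - ε / 2 - 1 / 2) * Gamma ((3 - r) / 2 - ε / 2) *
          (((3 - r) / 2 + ε / 2 - 1 / 2) * Gamma ((3 - r) / 2 + ε / 2))) *
          ((3 : ℝ) ^ ((r - ε) / 2) * 3 ^ ((r + ε) / 2)) := by
        simp only [scaledGamma]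
        ring_nf
    _ < 4 * (((3 - r) / 2 - 1 / 2) * Gamma ((3 - r) / 2)) ^ 2 * ((3 : ℝ) ^ (r / 2)) ^ 2 := by
        rw [hpow]; gcongr
    _ = scaledGamma r ^ 2 := by
        simp only [scaledGamma]; ring

theorem mul_Gamma_one_sub_div_two_eq {p : ℝ} (hp : p ≠ 1) :
    (1 - p) * (2 - p) * Gamma ((1 - p) / 2) = 2 * 3 ^ (-p / 2) * scaledGamma p := by
  have hΓ := Gamma_add_one (show (1 - p) / 2 ≠ 0 by intro h; apply hp; linarith)
  rw [show (1 - p) / 2 + 1 = (3 - p) / 2 by ring] at hΓ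
  have hpow : (3 : ℝ) ^ (-p / 2) * 3 ^ (p / 2) = 1 := by
    rw [← rpow_add (by norm_num), show -p / 2 + p / 2 = 0 by ring, rpow_zero]
  simp only [scaledGamma]
  linear_combination (-2 * (2 - p)) * hΓ - (2 * (2 - p) * Gamma ((3 - p) / 2)) * hpow

theorem scaledGamma_zero : scaledGamma 0 = √π := by
  rw [scaledGamma, show ((3 : ℝ) - 0) / 2 = 1 / 2 + 1 by norm_num, Gamma_add_one (by norm_num),
    Gamma_one_half_eq, zero_div, rpow_zero]
  ring

theorem sqrt_pi_lt_scaledGamma_half : √π < scaledGamma (1 / 2) := by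
  have hhalf : scaledGamma (1 / 2) = 3 / 8 * (Gamma (1 / 4) * 3 ^ (1 / 4 : ℝ)) := by
    rw [scaledGamma, show (3 - 1 / 2 : ℝ) / 2 = 1 / 4 + 1 by norm_num, Gamma_add_one (by norm_num)]
    norm_num
    ring
  -- Euler's sequence at `n = 27` is accurate enough, and `27 ^ (1/4) * 3 ^ (1/4) = 3`
  have hseq := GammaSeq_le_Gamma (x := 1 / 4) (by norm_num) (n := 27) (by norm_num)
  rw [GammaSeq, Nat.cast_ofNat, mul_div_assoc] at hseq
  set K := (Nat.factorial 27 : ℝ) / ∏ j ∈ range (27 + 1), ((1 : ℝ) / 4 + j)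
  have hK : 1.7725 < 9 / 8 * K := by norm_num [K, prod_range_succ, Nat.factorial]
  have hroot : (27 : ℝ) ^ (1 / 4 : ℝ) * 3 ^ (1 / 4 : ℝ) = 3 := by
    rw [← mul_rpow (by norm_num) (by norm_num), show (27 * 3 : ℝ) = 3 ^ (4 : ℝ) by norm_num,
      ← rpow_mul (by norm_num)]
    norm_num
  have hsqrt : √π < 1.7725 := by
    rw [sqrt_lt' (by norm_num)]
    linarith [pi_lt_d6]
  rw [hhalf]
  calc √π < 9 / 8 * K := hsqrt.trans hK
    _ = 3 / 8 * ((27 : ℝ) ^ (1 / 4 : ℝ) * K * 3 ^ (1 / 4 : ℝ)) := by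
        linear_combination (-3 / 8 * K) * hroot
    _ ≤ 3 / 8 * (Gamma (1 / 4) * 3 ^ (1 / 4 : ℝ)) := by gcongr

theorem scaledGamma_lt_sqrt_pi : scaledGamma (49 / 50) < √π := by
  have hΓ : Gamma (101 / 100) ≤ 1 := by
    simpa [Gamma_two] using convexOn_Gamma.le_max_of_mem_Icc (x := 1) (y := 2) (z := 101 / 100)
      (by norm_num) (by norm_num) (by norm_num)
  have h3 : (3 : ℝ) ^ ((49 / 50 : ℝ) / 2) ≤ √3 := by
    rw [sqrt_eq_rpow]
    exact rpow_le_rpow_of_exponent_le (by norm_num) (by norm_num)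
  have hsqrt : 51 / 50 * √3 < √π := by
    rw [lt_sqrt (by positivity), mul_pow, sq_sqrt (by norm_num)]
    linarith [pi_gt_d2]
  calc scaledGamma (49 / 50)
      ≤ (2 - 49 / 50) * 1 * √3 := by
        rw [scaledGamma, show (3 - 49 / 50 : ℝ) / 2 = 101 / 100 by norm_num]
        gcongr
    _ < √π := by linarith

theorem min_scaledGamma_lt_scaledGamma {x y z : ℝ} (hx : 0 ≤ x) (hy : y < 2) (hz : z ∈ Ioo x y) :
    min (scaledGamma x) (scaledGamma y) < scaledGamma z :=
  min_lt_of_mem_Ioo_of_mul_lt_sq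
    (continuousOn_scaledGamma.mono fun p hp => show p < 3 by linarith [hp.2])
    (fun p hp => (scaledGamma_pos (by linarith [hp.2])).le)
    (fun _ _ hε hxr hry => scaledGamma_sub_mul_scaledGamma_add_lt hε (by linarith) (by linarith))
    hz

theorem exists_unique_crossing :
    ∃ p₀ ∈ Ioo (0:ℝ) 1,
      2 * Real.sqrt π * (3:ℝ) ^ (-p₀ / 2)
        = (1 - p₀) * (2 - p₀) * Real.Gamma ((1 - p₀) / 2) ∧
      (∀ p ∈ Ioo (0:ℝ) 1,
        2 * Real.sqrt π * (3:ℝ) ^ (-p / 2)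
          = (1 - p) * (2 - p) * Real.Gamma ((1 - p) / 2) → p = p₀) ∧
      (∀ p ∈ Ioo p₀ 1,
        2 * Real.sqrt π * (3:ℝ) ^ (-p / 2)
          > (1 - p) * (2 - p) * Real.Gamma ((1 - p) / 2)) ∧
      (∀ p ∈ Ioo (0:ℝ) p₀,
        2 * Real.sqrt π * (3:ℝ) ^ (-p / 2)
          < (1 - p) * (2 - p) * Real.Gamma ((1 - p) / 2)) := by
  obtain ⟨p₀, hp₀, heq, huniq, hright, hleft⟩ := exists_unique_crossing_of_min_lt (b := 1)
    (continuousOn_scaledGamma.mono fun p hp => show p < 3 by linarith [hp.2])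
    (fun x y z hx hy hz => min_scaledGamma_lt_scaledGamma hx (by linarith) hz)
    scaledGamma_zero sqrt_pi_lt_scaledGamma_half scaledGamma_lt_sqrt_pi
    (by norm_num) (by norm_num) (by norm_num)
  have hlhs : ∀ p : ℝ, 2 * √π * (3 : ℝ) ^ (-p / 2) = 2 * 3 ^ (-p / 2) * √π := fun p => by ring
  have hk : ∀ p : ℝ, 0 < 2 * (3 : ℝ) ^ (-p / 2) := fun p => by positivity
  refine ⟨p₀, hp₀, ?_, fun p hp h => huniq p hp ?_, fun p hp => ?_, fun p hp => ?_⟩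
  · rw [hlhs, mul_Gamma_one_sub_div_two_eq hp₀.2.ne, heq]
  · rw [hlhs, mul_Gamma_one_sub_div_two_eq hp.2.ne] at h
    exact (mul_left_cancel₀ (hk p).ne' h).symm
  · rw [gt_iff_lt, hlhs, mul_Gamma_one_sub_div_two_eq hp.2.ne]
    exact mul_lt_mul_of_pos_left (hright p hp) (hk p)
  · rw [hlhs, mul_Gamma_one_sub_div_two_eq (hp.2.trans hp₀.2).ne]
    exact mul_lt_mul_of_pos_left (hleft p hp) (hk p)
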